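/- arXiv:1812.11823 — 2 statements merged into one kernel-verified Lean document; each statement's English description precedes it below -/
import Mathlib

section
/- Let Ř be the super R-matrix on V⊗V and consider the weight-λ_d subspace of V^{⊗d} spanned by tensors ε_{τ(1)}⊗...⊗ε_{τ(d)} for τ ∈ S_d, where d < m+n. Every such basis vector w_τ is a nonzero ℂ(q)-multiple of h·w for some h in the subalgebra of End(V^{⊗d}) generated by Ř₁,...,Ř_{d-1}, where w = ε₁⊗ε₂⊗...⊗ε_d. -/
set_option synthInstance.maxHeartbeats 400000
set_option maxHeartbeats 1000000

noncomputable section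

abbrev K : Type := RatFunc ℂ

noncomputable def q : K := RatFunc.X

/-- Parity: p(i) = 0 for the first m basis vectors, 1 for the rest. -/
def par (m : ℕ) {N : ℕ} (i : Fin N) : ℕ := if (i : ℕ) < m then 0 else 1

/-- Matrix unit E_{ab} (0-indexed). -/
def MU {N : ℕ} (a b : Fin N) : Matrix (Fin N) (Fin N) K :=
  Matrix.single a b 1

/-- Super tensor product of two matrices acting on V ⊗ V, where `pY` is the
parity of the second (homogeneous) factor: the Koszul sign rule
(X⊗Y)(u⊗w) = (-1)^{p(Y)p(u)} Xu ⊗ Yw is built into the matrix entries, so that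
ordinary multiplication of these matrices realizes the super product. -/
def st (m : ℕ) {N : ℕ} (X Y : Matrix (Fin N) (Fin N) K) (pY : ℕ) :
    Matrix (Fin N × Fin N) (Fin N × Fin N) K :=
  Matrix.of fun rc cc =>
    (-1 : K) ^ (pY * par m cc.1) * X rc.1 cc.1 * Y rc.2 cc.2

/-- The super R-matrix Ř on V ⊗ V. -/
def Rmat (m N : ℕ) : Matrix (Fin N × Fin N) (Fin N × Fin N) K :=
  (∑ i : Fin N, ((-1 : K) ^ par m i * q ^ ((-1 : ℤ) ^ par m i)) •
      st m (MU i i) (MU i i) 0)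
  + (∑ i : Fin N, ∑ j : Fin N,
      if i ≠ j then ((-1 : K) ^ par m i) • st m (MU j i) (MU i j) (par m i + par m j)
      else 0)
  + (∑ i : Fin N, ∑ j : Fin N,
      if (i : ℕ) < (j : ℕ) then (q - q⁻¹) • st m (MU i i) (MU j j) 0 else 0)

/-- Řⱼ acting on positions j, j+1 (0-indexed) of V^{⊗d}. -/
def Rop (m N d : ℕ) (j : ℕ) (hj : j + 1 < d) :
    Matrix (Fin d → Fin N) (Fin d → Fin N) K :=
  Matrix.of fun a b =>
    if ∀ k : Fin d, (k : ℕ) ≠ j → (k : ℕ) ≠ j + 1 → a k = b k then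
      Rmat m N (a ⟨j, by omega⟩, a ⟨j + 1, hj⟩) (b ⟨j, by omega⟩, b ⟨j + 1, hj⟩)
    else 0

/-!
The adjacent transpositions `s_j` generate `S_d`, so it suffices to pass from `w_σ` to `w_{σ s_j}`.
The entries of `w_σ` are distinct, and on a basis tensor `e_b` with `b_j ≠ b_{j+1}` the operator
`Ř_j` acts as `Ř_j e_b = ± e_{b ∘ s_j} + δ e_b`, where `δ ∈ {0, q - q⁻¹}`. Hence
`e_{b ∘ s_j} = ± (Ř_j - δ) e_b`, and composing these steps along a word for `τ` gives `w_τ` as a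
nonzero multiple of `h w`.
-/

lemma neg_one_pow_mul_neg_one_pow_add_mul {R : Type*} [Monoid R] [HasDistribNeg R] (a b : ℕ) :
    (-1 : R) ^ a * (-1 : R) ^ ((a + b) * a) = (-1 : R) ^ (a * b) := by
  rw [← pow_add, show a + (a + b) * a = a * (a + 1) + a * b by ring, pow_add,
    (Nat.even_mul_succ_self a).neg_one_pow, one_mul]

lemma funext_iff_of_eq_off_pair {α β : Type*} {a b : α → β} {i i' : α}
    (h : ∀ k, k ≠ i → k ≠ i' → a k = b k) : a = b ↔ a i = b i ∧ a i' = b i' := by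
  refine ⟨fun hab => hab ▸ ⟨rfl, rfl⟩, fun ⟨hi, hi'⟩ => funext fun k => ?_⟩
  by_cases hki : k = i
  · exact hki ▸ hi
  by_cases hki' : k = i'
  · exact hki' ▸ hi'
  exact h k hki hki'

lemma Equiv.Perm.mem_mclosure_adjacent_swap {d : ℕ} (σ : Equiv.Perm (Fin d)) :
    σ ∈ Submonoid.closure
      {s | ∃ (j : ℕ) (hj : j + 1 < d), s = Equiv.swap ⟨j, by omega⟩ ⟨j + 1, hj⟩} := by
  cases d with
  | zero => simp [Subsingleton.elim σ 1]
  | succ n =>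
    refine Submonoid.closure_mono ?_
      (Equiv.Perm.mclosure_swap_castSucc_succ n ▸ Submonoid.mem_top σ)
    rintro _ ⟨i, rfl⟩
    exact ⟨i, by simp, rfl⟩

lemma st_MU_apply (m N : ℕ) (a b c e : Fin N) (pY : ℕ) (u v x y : Fin N) :
    st m (MU a b) (MU c e) pY (u, v) (x, y) =
      if u = a ∧ x = b ∧ v = c ∧ y = e then (-1 : K) ^ (pY * par m x) else 0 := by
  simp only [st, Matrix.of_apply, MU, Matrix.single_apply]
  split_ifs <;> simp_all

lemma Rmat_apply_of_ne (m N : ℕ) (u v x y : Fin N) (hxy : x ≠ y) :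
    Rmat m N (u, v) (x, y) =
      (if u = y ∧ v = x then (-1 : K) ^ (par m x * par m y) else 0)
      + (if u = x ∧ v = y ∧ (x : ℕ) < (y : ℕ) then q - q⁻¹ else 0) := by
  simp only [Rmat, Matrix.add_apply, Matrix.sum_apply, Matrix.ite_apply, Matrix.smul_apply,
    Matrix.zero_apply, st_MU_apply, smul_ite, smul_zero]
  rw [Fintype.sum_eq_zero, Fintype.sum_eq_single x, Fintype.sum_eq_single y,
    Fintype.sum_eq_single x, Fintype.sum_eq_single y]
  all_goals (try intros); (try split_ifs) <;>
    simp_all [neg_one_pow_mul_neg_one_pow_add_mul, eq_comm]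

lemma Rop_mulVecLin_single (m N d j : ℕ) (hj : j + 1 < d) (b : Fin d → Fin N)
    (hb : b ⟨j, by omega⟩ ≠ b ⟨j + 1, hj⟩) :
    (Rop m N d j hj).mulVecLin (Pi.single b 1) =
      (-1 : K) ^ (par m (b ⟨j, by omega⟩) * par m (b ⟨j + 1, hj⟩)) •
          Pi.single (b ∘ Equiv.swap ⟨j, by omega⟩ ⟨j + 1, hj⟩) 1 +
        (if (b ⟨j, by omega⟩ : ℕ) < b ⟨j + 1, hj⟩ then q - q⁻¹ else 0) • Pi.single b 1 := by
  set i : Fin d := ⟨j, by omega⟩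
  set i' : Fin d := ⟨j + 1, hj⟩
  funext a
  have agree_iff : (∀ k : Fin d, (k : ℕ) ≠ j → (k : ℕ) ≠ j + 1 → a k = b k) ↔
      ∀ k, k ≠ i → k ≠ i' → a k = b k :=
    forall_congr' fun k => by rw [← Fin.val_ne_iff, ← Fin.val_ne_iff]
  simp only [Matrix.mulVecLin_apply, Matrix.mulVec_single, MulOpposite.op_one, one_smul,
    Matrix.col_apply, Rop, Matrix.of_apply, Pi.add_apply, Pi.smul_apply, smul_eq_mul,
    Pi.single_apply, agree_iff, show (⟨j, by omega⟩ : Fin d) = i from rfl,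
    show (⟨j + 1, hj⟩ : Fin d) = i' from rfl]
  by_cases hab : ∀ k, k ≠ i → k ≠ i' → a k = b k
  · rw [if_pos hab]
    have hab_swap : ∀ k, k ≠ i → k ≠ i' → a k = (b ∘ Equiv.swap i i') k := fun k hk hk' => by
      rw [Function.comp_apply, Equiv.swap_apply_of_ne_of_ne hk hk', hab k hk hk']
    simp only [Rmat_apply_of_ne _ _ _ _ _ _ hb, funext_iff_of_eq_off_pair hab,
      funext_iff_of_eq_off_pair hab_swap, Function.comp_apply, Equiv.swap_apply_left,
      Equiv.swap_apply_right]
    split_ifs <;> simp_all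
  · have hne : a ≠ b := fun h => hab fun k _ _ => congrFun h k
    have hne_swap : a ≠ b ∘ Equiv.swap i i' := fun h => hab fun k hk hk' => by
      rw [h, Function.comp_apply, Equiv.swap_apply_of_ne_of_ne hk hk']
    rw [if_neg hab, if_neg hne, if_neg hne_swap]
    ring

def ropAlgebra (m N d : ℕ) : Subalgebra K (Module.End K ((Fin d → Fin N) → K)) :=
  Algebra.adjoin K {f | ∃ (j : ℕ) (hj : j + 1 < d), f = (Rop m N d j hj).mulVecLin}

def RopReachable (m N d : ℕ) (v w : (Fin d → Fin N) → K) : Prop :=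
  ∃ h : Module.End K ((Fin d → Fin N) → K), h ∈ ropAlgebra m N d ∧ ∃ c : K, c ≠ 0 ∧ v = c • h w

namespace RopReachable

variable {m N d : ℕ}

lemma refl (v : (Fin d → Fin N) → K) : RopReachable m N d v v :=
  ⟨1, Subalgebra.one_mem _, 1, one_ne_zero, by simp⟩

lemma trans {u v w : (Fin d → Fin N) → K} (huv : RopReachable m N d u v)
    (hvw : RopReachable m N d v w) : RopReachable m N d u w := by
  obtain ⟨h, hh, c, hc, rfl⟩ := huv
  obtain ⟨h', hh', c', hc', rfl⟩ := hvw
  exact ⟨h * h', mul_mem hh hh', c * c', mul_ne_zero hc hc', by simp [smul_smul]⟩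

end RopReachable

lemma ropReachable_single_comp_swap (m N d j : ℕ) (hj : j + 1 < d) (b : Fin d → Fin N)
    (hb : b ⟨j, by omega⟩ ≠ b ⟨j + 1, hj⟩) :
    RopReachable m N d (Pi.single (b ∘ Equiv.swap ⟨j, by omega⟩ ⟨j + 1, hj⟩) 1)
      (Pi.single b 1) := by
  have hR := Rop_mulVecLin_single m N d j hj b hb
  set s : K := (-1) ^ (par m (b ⟨j, by omega⟩) * par m (b ⟨j + 1, hj⟩))
  set δ : K := if (b ⟨j, by omega⟩ : ℕ) < b ⟨j + 1, hj⟩ then q - q⁻¹ else 0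
  have hs : s * s = 1 := by rw [← pow_add, ← two_mul, pow_mul, neg_one_sq, one_pow]
  refine ⟨(Rop m N d j hj).mulVecLin - δ • 1,
    sub_mem (Algebra.subset_adjoin ⟨j, hj, rfl⟩) (Subalgebra.smul_mem _ (one_mem _) δ),
    s, left_ne_zero_of_mul_eq_one hs, ?_⟩
  rw [LinearMap.sub_apply, hR, LinearMap.smul_apply, Module.End.one_apply, add_sub_cancel_right,
    smul_smul, hs, one_smul]

theorem weight_vector_cyclic_general (m n d : ℕ)
    (hdn : d < m + n) (τ : Equiv.Perm (Fin d)) :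
    ∃ h : Module.End K ((Fin d → Fin (m + n)) → K),
      h ∈ Algebra.adjoin K
          {f : Module.End K ((Fin d → Fin (m + n)) → K) |
            ∃ (j : ℕ) (hj : j + 1 < d), f = (Rop m (m + n) d j hj).mulVecLin} ∧
      ∃ c : K, c ≠ 0 ∧
        Pi.single (fun k : Fin d => Fin.castLE (Nat.le_of_lt hdn) (τ k)) (1 : K) =
          c • h (Pi.single (fun k : Fin d => Fin.castLE (Nat.le_of_lt hdn) k) (1 : K)) := by
  let w : Equiv.Perm (Fin d) → (Fin d → Fin (m + n)) → K :=
    fun σ => Pi.single (fun k => Fin.castLE (Nat.le_of_lt hdn) (σ k)) 1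
  suffices ∀ σ, RopReachable m (m + n) d (w σ) (w 1) from this τ
  intro σ
  have hσ := σ.mem_mclosure_adjacent_swap
  induction hσ using Submonoid.closure_induction_right with
  | one => exact .refl _
  | mul_right σ _ s hs ih =>
    obtain ⟨j, hj, rfl⟩ := hs
    refine .trans ?_ ih
    refine ropReachable_single_comp_swap m (m + n) d j hj
      (fun k => Fin.castLE (Nat.le_of_lt hdn) (σ k)) fun h => ?_
    simpa [Fin.ext_iff] using σ.injective (Fin.castLE_injective _ h)

/-- for d < m+n and any permutation τ ∈ S_d, the weight-λ_d basis
vector w_τ = ε_{τ(1)}⊗...⊗ε_{τ(d)} of V^{⊗d} is a nonzero scalar multiple of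
h·w for some h in the subalgebra of End(V^{⊗d}) generated by the Řⱼ, where
w = ε₁⊗...⊗ε_d. -/
theorem weight_vector_cyclic (m n d : ℕ) (hm : 1 ≤ m) (hn : 1 ≤ n) (hd : 1 ≤ d)
    (hdn : d < m + n) (τ : Equiv.Perm (Fin d)) :
    ∃ h : Module.End K ((Fin d → Fin (m + n)) → K),
      h ∈ Algebra.adjoin K
          {f : Module.End K ((Fin d → Fin (m + n)) → K) |
            ∃ (j : ℕ) (hj : j + 1 < d), f = (Rop m (m + n) d j hj).mulVecLin} ∧
      ∃ c : K, c ≠ 0 ∧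
        Pi.single (fun k : Fin d => Fin.castLE (Nat.le_of_lt hdn) (τ k)) (1 : K) =
          c • h (Pi.single (fun k : Fin d => Fin.castLE (Nat.le_of_lt hdn) k) (1 : K)) :=
  weight_vector_cyclic_general m n d hdn τ

end
end

section
/- In the matrix superalgebra, the computation [E₁⊗1⊗1, [K₁⊗K₁⊗E₁, E_{n',1}⊗1⊗1]_q]_{q⁻¹} + [K₁⊗K₁⊗E₁, [E₁⊗1⊗1, E_{n',1}⊗1⊗1]_q]_{q⁻¹} = 0 holds, where E₁ = E_{12}, K₁ = diag(q,q⁻¹,1,...,1); each individual triple bracket equals ±(1-q²)(q-q⁻¹) E_{n',1}⊗E_{12}⊗E_{12} and they cancel. -/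
set_option synthInstance.maxHeartbeats 400000
set_option maxHeartbeats 1000000

noncomputable section

/-- Matrix unit E_{ab}, with 1-indexed row/column labels a, b ∈ {1,...,N}. -/
def Eij (N a b : ℕ) : Matrix (Fin N) (Fin N) K :=
  Matrix.of fun r c => if r.val + 1 = a ∧ c.val + 1 = b then 1 else 0

/-- Parity of the 1-indexed basis label i: 0 for 1 ≤ i ≤ m, else 1. -/
def par1 (m i : ℕ) : ℕ := if i ≤ m then 0 else 1

/-- Super (Koszul-signed) triple tensor product X⊗Y⊗Z of matrices, where pY, pZ
are the parities of the (homogeneous) second and third factors: the sign rule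
(X⊗Y⊗Z)(u⊗v⊗w) = (-1)^{pY·p(u) + pZ·(p(u)+p(v))} Xu⊗Yv⊗Zw is built into the
entries, so ordinary multiplication realizes the super product. -/
def st3 (m : ℕ) {N : ℕ} (X Y Z : Matrix (Fin N) (Fin N) K) (pY pZ : ℕ) :
    Matrix (Fin N × Fin N × Fin N) (Fin N × Fin N × Fin N) K :=
  Matrix.of fun rc cc =>
    (-1 : K) ^ (pY * par1 m (cc.1.val + 1) +
        pZ * (par1 m (cc.1.val + 1) + par1 m (cc.2.1.val + 1))) *
      X rc.1 cc.1 * Y rc.2.1 cc.2.1 * Z rc.2.2 cc.2.2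

/-- q-supercommutator [X,Y]_v = XY - (-1)^{p(X)p(Y)} v YX with explicitly
supplied (global) parities pX, pY. -/
def brv {ι : Type} [Fintype ι] [DecidableEq ι] (X Y : Matrix ι ι K)
    (pX pY : ℕ) (v : K) : Matrix ι ι K :=
  X * Y - ((-1 : K) ^ (pX * pY) * v) • (Y * X)

/-- K₁ = diag(q, q⁻¹, 1, ..., 1). -/
def K1 (N : ℕ) : Matrix (Fin N) (Fin N) K :=
  Matrix.diagonal fun k => if k.val = 0 then q else if k.val = 1 then q⁻¹ else 1

lemma sum3_mul (N : ℕ) (f g h : Fin N → K) :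
    (∑ a, f a) * (∑ b, g b) * (∑ c, h c) = ∑ a, ∑ b, ∑ c, f a * g b * h c := by
  rw [Finset.sum_mul_sum, Finset.sum_mul]
  refine Finset.sum_congr rfl fun a _ => ?_
  rw [Finset.sum_mul]
  exact Finset.sum_congr rfl fun b _ => Finset.mul_sum _ _ _

lemma st3_mul (m N : ℕ) (X Y Z X' Y' Z' : Matrix (Fin N) (Fin N) K) :
    st3 m X Y Z 0 0 * st3 m X' Y' Z' 0 0 = st3 m (X*X') (Y*Y') (Z*Z') 0 0 := by
  ext ⟨r1,r2,r3⟩ ⟨c1,c2,c3⟩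
  simp only [st3, Matrix.mul_apply, Matrix.of_apply, Nat.zero_mul, Nat.add_zero, pow_zero,
    one_mul]
  rw [sum3_mul, Fintype.sum_prod_type]
  refine Finset.sum_congr rfl fun a _ => ?_
  rw [Fintype.sum_prod_type]
  refine Finset.sum_congr rfl fun b _ => Finset.sum_congr rfl fun c _ => ?_
  ring

lemma st3_smul1 (m N : ℕ) (c : K) (X Y Z : Matrix (Fin N) (Fin N) K) (p r : ℕ) :
    st3 m (c • X) Y Z p r = c • st3 m X Y Z p r := by
  ext i j
  simp only [st3, Matrix.of_apply, Matrix.smul_apply, smul_eq_mul]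
  ring

lemma st3_zero1 (m N : ℕ) (Y Z : Matrix (Fin N) (Fin N) K) (p r : ℕ) :
    st3 m (0 : Matrix (Fin N) (Fin N) K) Y Z p r = 0 := by
  ext i j
  simp [st3]

lemma Eij_mul_same (N a b d : ℕ) (hb1 : 1 ≤ b) (hbN : b ≤ N) :
    Eij N a b * Eij N b d = Eij N a d := by
  ext r s
  rw [Matrix.mul_apply]
  rw [Finset.sum_eq_single (⟨b-1, by omega⟩ : Fin N)]
  · simp only [Eij, Matrix.of_apply]
    have hb : (b - 1) + 1 = b := by omega
    by_cases h1 : r.val + 1 = a <;> by_cases h2 : s.val + 1 = d <;> simp [h1, h2, hb]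
  · intro k _ hk
    have : ¬ (k.val + 1 = b) := by
      intro hknz
      exact hk (Fin.ext (by simp; omega))
    simp only [Eij, Matrix.of_apply]
    by_cases h1 : r.val + 1 = a ∧ k.val + 1 = b
    · exact absurd h1.2 this
    · simp [h1]
  · simp

lemma Eij_mul_ne (N a b c d : ℕ) (h : b ≠ c) : Eij N a b * Eij N c d = 0 := by
  ext r s
  rw [Matrix.mul_apply]
  refine Finset.sum_eq_zero fun k _ => ?_
  simp only [Eij, Matrix.of_apply, Matrix.zero_apply]
  by_cases h1 : r.val + 1 = a ∧ k.val + 1 = b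
  · by_cases h2 : k.val + 1 = c ∧ s.val + 1 = d
    · exact absurd (by omega : b = c) h
    · simp [h2]
  · simp [h1]

lemma K1_mul_Eij (N a b : ℕ) :
    K1 N * Eij N a b = (if a = 1 then q else if a = 2 then q⁻¹ else 1) • Eij N a b := by
  ext i j
  simp only [K1, Eij, Matrix.diagonal_mul, Matrix.of_apply, Matrix.smul_apply, smul_eq_mul]
  by_cases hij : i.val + 1 = a ∧ j.val + 1 = b
  · obtain ⟨h1, h2⟩ := hij
    simp only [h1, h2, and_self, if_true, mul_one]
    split_ifs <;> first | rfl | omega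
  · simp [hij]

lemma Eij_mul_K1 (N a b : ℕ) :
    Eij N a b * K1 N = (if b = 1 then q else if b = 2 then q⁻¹ else 1) • Eij N a b := by
  ext i j
  simp only [K1, Eij, Matrix.mul_diagonal, Matrix.of_apply, Matrix.smul_apply, smul_eq_mul]
  by_cases hij : i.val + 1 = a ∧ j.val + 1 = b
  · obtain ⟨h1, h2⟩ := hij
    simp only [h1, h2, and_self, if_true, one_mul, mul_one]
    split_ifs <;> first | rfl | omega
  · simp [hij]

/-- in the super triple tensor product of matrix algebras, with
E₁ = E_{12}, K₁ = diag(q,q⁻¹,1,…,1), the two triple brackets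
[E₁⊗1⊗1, [K₁⊗K₁⊗E₁, E_{n',1}⊗1⊗1]_q]_{q⁻¹} and
[K₁⊗K₁⊗E₁, [E₁⊗1⊗1, E_{n',1}⊗1⊗1]_q]_{q⁻¹} cancel. -/
theorem serre_cubic_tensor_cancellation (m n : ℕ) (hm : 2 ≤ m) (hn : 2 ≤ n) :
    brv (st3 m (Eij (m + n) 1 2) 1 1 0 0)
        (brv (st3 m (K1 (m + n)) (K1 (m + n)) (Eij (m + n) 1 2) 0 0)
          (st3 m (Eij (m + n) (m + n) 1) 1 1 0 0) 0 1 q) 0 1 q⁻¹ +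
      brv (st3 m (K1 (m + n)) (K1 (m + n)) (Eij (m + n) 1 2) 0 0)
        (brv (st3 m (Eij (m + n) 1 2) 1 1 0 0)
          (st3 m (Eij (m + n) (m + n) 1) 1 1 0 0) 0 1 q) 0 1 q⁻¹ = 0 := by
  have hq : (q : K) ≠ 0 := by unfold q; exact RatFunc.X_ne_zero
  set N := m + n with hN
  set E1 := Eij N 1 2 with hE1
  set F := Eij N N 1 with hF
  set G := Eij N N 2 with hG
  set Kd := K1 N with hKd
  -- component products
  have hEF : E1 * F = 0 := Eij_mul_ne N 1 2 N 1 (by omega)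
  have hFE : F * E1 = G := Eij_mul_same N N 1 2 le_rfl (by omega)
  have hKF : Kd * F = F := by
    have h := K1_mul_Eij N N 1
    rw [if_neg (by omega), if_neg (by omega), one_smul] at h
    exact h
  have hFK : F * Kd = q • F := by
    have h := Eij_mul_K1 N N 1
    rw [if_pos rfl] at h
    exact h
  have hKG : Kd * G = G := by
    have h := K1_mul_Eij N N 2
    rw [if_neg (by omega), if_neg (by omega), one_smul] at h
    exact h
  have hGK : G * Kd = q⁻¹ • G := by
    have h := Eij_mul_K1 N N 2
    rw [if_neg (by omega), if_pos rfl] at h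
    exact h
  set A := st3 m E1 1 1 0 0 with hA
  set B := st3 m Kd Kd E1 0 0 with hB
  set C := st3 m F 1 1 0 0 with hC
  set S := st3 m G Kd E1 0 0 with hS
  have hBC : B * C = st3 m F Kd E1 0 0 := by
    rw [hB, hC, st3_mul, hKF, mul_one, mul_one]
  have hCB : C * B = q • st3 m F Kd E1 0 0 := by
    rw [hC, hB, st3_mul, hFK, one_mul, one_mul, st3_smul1]
  have hAC : A * C = 0 := by
    rw [hA, hC, st3_mul, hEF, one_mul, st3_zero1]
  have hCA : C * A = st3 m G 1 1 0 0 := by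
    rw [hC, hA, st3_mul, hFE, one_mul]
  have hAS : A * st3 m F Kd E1 0 0 = 0 := by
    rw [hA, st3_mul, hEF, one_mul, one_mul, st3_zero1]
  have hSA : st3 m F Kd E1 0 0 * A = S := by
    rw [hA, hS, st3_mul, hFE, mul_one, mul_one]
  have hBG : B * st3 m G 1 1 0 0 = S := by
    rw [hB, hS, st3_mul, hKG, mul_one, mul_one]
  have hGB : st3 m G 1 1 0 0 * B = q⁻¹ • S := by
    rw [hB, hS, st3_mul, hGK, one_mul, one_mul, st3_smul1]
  simp only [brv, Nat.zero_mul, pow_zero, one_mul]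
  rw [hBC, hCB, hAC, hCA]
  simp only [mul_sub, sub_mul, smul_mul_assoc, mul_smul_comm, smul_sub, smul_smul,
    zero_sub, sub_zero, zero_mul, mul_zero, smul_zero, mul_neg, neg_mul, smul_neg,
    neg_neg, sub_neg_eq_add]
  rw [hAS, hSA, hBG, hGB]
  have h1 : q⁻¹ * (q * q) = q := by field_simp
  have h2 : q⁻¹ * q = 1 := inv_mul_cancel₀ hq
  rw [h1, h2, one_smul, smul_zero, sub_zero]
  abel
end
end
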